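/- arXiv:2503.15263 — 2 statements merged into one kernel-verified Lean document; each statement's English description precedes it below -/
import Mathlib

section
/- Let φ : Ω → ℝ be continuous and τ an S-invariant Borel probability measure on Ω. Fix a ∈ E and let 𝐚 be the constant-a configuration. Then lim_{n→∞} ∫_Ω Σ_{i=−n}^{n} [ φ(S^i(𝐚_{−∞}^{−1} ω_0^{∞})) − φ(S^i(𝐚_{−∞}^{0} ω_1^{∞})) ] τ(dω) = ∫_Ω φ dτ − φ(𝐚), where 𝐚_{−∞}^{−1} ω_0^{∞} (resp. 𝐚_{−∞}^{0} ω_1^{∞}) denotes the configuration equal to a at all coordinates k ≤ −1 (resp. k ≤ 0) and equal to ω_k at the remaining coordinates. -/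
open Filter Topology MeasureTheory

namespace GP

/-- The configuration space `Ω = E^ℤ`. -/
abbrev Conf (E : Type*) := ℤ → E

variable {E : Type*}

/-- The shift by `i`: `(shiftZ i ω) k = ω (k + i)`.  The left shift `S` is `shiftZ 1`. -/
def shiftZ (i : ℤ) (ω : Conf E) : Conf E := fun k => ω (k + i)

/-- The cylinder set determined by a word `w ∈ E^n` (placed on coordinates `0,…,n-1`). -/
def cylW {n : ℕ} (w : Fin n → E) : Set (Conf E) := {ω | ∀ j : Fin n, ω ((j : ℕ) : ℤ) = w j}

/-- The cylinder set `[ω_0^{n-1}]`. -/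
def cylPt (ω : Conf E) (n : ℕ) : Set (Conf E) :=
  {ω' | ∀ j : ℕ, j < n → ω' (j : ℤ) = ω (j : ℤ)}

/-- Birkhoff sum `S_n φ = ∑_{k=0}^{n-1} φ ∘ S^k`. -/
def birk (φ : Conf E → ℝ) (n : ℕ) (ω : Conf E) : ℝ :=
  ∑ k ∈ Finset.range n, φ (shiftZ (k : ℤ) ω)

/-- Topological pressure of `φ` on the full shift:
`P(φ) = lim_n (1/n) log ∑_{w ∈ E^n} sup_{ω ∈ [w]} exp (S_n φ (ω))`
(the limit exists; we use `limsup` as the defining expression). -/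
noncomputable def press [Fintype E] (φ : Conf E → ℝ) : ℝ :=
  Filter.limsup (fun n : ℕ =>
    Real.log (∑ w : Fin n → E, sSup ((fun ω => Real.exp (birk φ n ω)) '' cylW w)) / n) atTop

/-- Kolmogorov–Sinai entropy of a shift-invariant measure on the full shift,
computed along the canonical generating partition into cylinders
(the limit exists; we use `limsup` as the defining expression). -/
noncomputable def ent [Fintype E] [MeasurableSpace E] (μ : Measure (Conf E)) : ℝ :=
  Filter.limsup (fun n : ℕ =>
    (- ∑ w : Fin n → E, ((μ (cylW w)).toReal * Real.log (μ (cylW w)).toReal)) / n) atTop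

/-- Shift invariance of a measure. -/
def ShiftInv [MeasurableSpace E] (μ : Measure (Conf E)) : Prop :=
  Measure.map (shiftZ 1) μ = μ

/-- `μ` is an equilibrium state for `φ`: `μ` is a shift-invariant Borel probability
measure with `h(μ) + ∫ φ dμ = P(φ)`. -/
def IsEquilibrium [Fintype E] [MeasurableSpace E] (φ : Conf E → ℝ)
    (μ : Measure (Conf E)) : Prop :=
  IsProbabilityMeasure μ ∧ ShiftInv μ ∧ ent μ + ∫ ω, φ ω ∂μ = press φ

/-- `ω^c`: the configuration equal to `c` at site `0` and to `ω` elsewhere. -/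
def upd0 (ω : Conf E) (c : E) : Conf E := Function.update ω 0 c

/-- Partial sums `ρ_n(ξ,η) = ∑_{i=-n}^{n} (φ(S^i ξ) - φ(S^i η))`. -/
noncomputable def rhoN (φ : Conf E → ℝ) (ξ η : Conf E) (n : ℕ) : ℝ :=
  ∑ i ∈ Finset.Icc (-(n : ℤ)) (n : ℤ), (φ (shiftZ i ξ) - φ (shiftZ i η))

/-- `φ` has the extensibility property: for all `a b ∈ E`, the functions
`ω ↦ ∑_{i=-n}^{n} (φ(S^i(ω^b)) - φ(S^i(ω^a)))` converge uniformly as `n → ∞`. -/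
def Extensible (φ : Conf E → ℝ) : Prop :=
  ∀ a b : E, ∃ r : Conf E → ℝ,
    TendstoUniformly (fun n ω => rhoN φ (upd0 ω b) (upd0 ω a) n) r atTop

/-- The cocycle `ρ^φ(ξ,η) = lim_n ∑_{i=-n}^{n} (φ(S^i ξ) - φ(S^i η))`. -/
noncomputable def rho (φ : Conf E → ℝ) (ξ η : Conf E) : ℝ :=
  limUnder atTop (rhoN φ ξ η)

/-- `ξ` and `η` differ in at most finitely many coordinates. -/
def FinDiff (ξ η : Conf E) : Prop := {k : ℤ | ξ k ≠ η k}.Finite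

/-- `ovr Λ ξ ω` is the configuration `ξ_Λ ω_{ℤ∖Λ}`, equal to `ξ` on `Λ` and to `ω` off `Λ`. -/
def ovr (Λ : Finset ℤ) (ξ : {k // k ∈ Λ} → E) (ω : Conf E) : Conf E :=
  fun k => if h : k ∈ Λ then ξ ⟨k, h⟩ else ω k

/-- `γ` is a specification: each `γ_Λ(·|ω_{Λ^c})` is a probability distribution on `E^Λ`,
and the family is consistent (`γ_Λ = γ_Λ ∘ γ_V` for `V ⊆ Λ`); here `γ Λ ω` denotes
`γ_Λ(ω_Λ | ω_{Λ^c})`. -/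
def IsSpecification [Fintype E] (γ : Finset ℤ → Conf E → ℝ) : Prop :=
  (∀ (Λ : Finset ℤ) (ω : Conf E), 0 ≤ γ Λ ω) ∧
  (∀ (Λ : Finset ℤ) (ω : Conf E), ∑ ξ : {k // k ∈ Λ} → E, γ Λ (ovr Λ ξ ω) = 1) ∧
  (∀ V Λ : Finset ℤ, V ⊆ Λ → ∀ ω : Conf E,
     γ Λ ω = (∑ η : {k // k ∈ V} → E, γ Λ (ovr V η ω)) * γ V ω)

/-- Non-nullness: `inf_ω γ_Λ(ω_Λ|ω_{Λ^c}) > 0` for every finite `Λ`. -/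
def NonNull (γ : Finset ℤ → Conf E → ℝ) : Prop :=
  ∀ Λ : Finset ℤ, ∃ c > (0 : ℝ), ∀ ω : Conf E, c ≤ γ Λ ω

/-- Continuity (quasilocality): `ω ↦ γ_Λ(ω_Λ|ω_{Λ^c})` is continuous for every finite `Λ`. -/
def ContSpec [TopologicalSpace E] (γ : Finset ℤ → Conf E → ℝ) : Prop :=
  ∀ Λ : Finset ℤ, Continuous (γ Λ)

/-- A Gibbsian specification: a non-null continuous specification. -/
def IsGibbsSpec [Fintype E] [TopologicalSpace E] (γ : Finset ℤ → Conf E → ℝ) : Prop :=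
  IsSpecification γ ∧ NonNull γ ∧ ContSpec γ

/-- Translation invariance of a specification: `γ_{Λ+1} = γ_Λ ∘ S`. -/
def SpecTI (γ : Finset ℤ → Conf E → ℝ) : Prop :=
  ∀ (Λ : Finset ℤ) (ω : Conf E), γ (Λ.image (· + 1)) ω = γ Λ (shiftZ 1 ω)

/-- `μ` is a DLR-Gibbs measure for the specification `γ`: `μ` is a Borel probability
measure satisfying the DLR equations `∫ γ_Λ(f|·) dμ = ∫ f dμ` for every finite `Λ`
and every continuous `f` (equivalently, each `γ_Λ` is a version of the conditional
probabilities of `μ`). -/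
def IsDLRGibbs [Fintype E] [MeasurableSpace E] [TopologicalSpace E]
    (γ : Finset ℤ → Conf E → ℝ) (μ : Measure (Conf E)) : Prop :=
  IsProbabilityMeasure μ ∧
  ∀ (Λ : Finset ℤ) (f : Conf E → ℝ), Continuous f →
    ∫ ω, (∑ ξ : {k // k ∈ Λ} → E, γ Λ (ovr Λ ξ ω) * f (ovr Λ ξ ω)) ∂μ = ∫ ω, f ω ∂μ

/-- The specification `γ^φ` associated with an extensible potential `φ`:
`γ^φ_Λ(ω_Λ|ω_{Λ^c}) = (∑_{ξ_Λ ∈ E^Λ} exp ρ^φ(ξ_Λ ω_{ℤ∖Λ}, ω))⁻¹`. -/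
noncomputable def specOf [Fintype E] (φ : Conf E → ℝ) : Finset ℤ → Conf E → ℝ :=
  fun Λ ω => (∑ ξ : {k // k ∈ Λ} → E, Real.exp (rho φ (ovr Λ ξ ω) ω))⁻¹

/-- The configuration `𝐚_{-∞}^{-1} b ω_1^{∞}`: equal to `a` at all negative
coordinates, to `b` at coordinate `0`, and to `ω` at positive coordinates. -/
def bca (a : E) (ω : Conf E) (b : E) : Conf E :=
  fun k => if k < 0 then a else if k = 0 then b else ω k

/-- The potential associated with a specification:
`φ_γ(ω) = log (γ_{{0}}(ω_0 | 𝐚_{-∞}^{-1} ω_1^{∞}) / γ_{{0}}(a | 𝐚_{-∞}^{-1} ω_1^{∞}))`. -/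
noncomputable def phiOf (γ : Finset ℤ → Conf E → ℝ) (a : E) (ω : Conf E) : ℝ :=
  Real.log (γ ({0} : Finset ℤ) (bca a ω (ω 0)) / γ ({0} : Finset ℤ) (bca a ω a))

/-- `μ` is weak Bowen-Gibbs for `φ` with constant `P`. -/
def WeakBowenGibbs [MeasurableSpace E] (μ : Measure (Conf E)) (φ : Conf E → ℝ)
    (P : ℝ) : Prop :=
  ∃ C : ℕ → ℝ, (∀ n, 0 < C n) ∧
    Tendsto (fun n : ℕ => Real.log (C n) / n) atTop (𝓝 0) ∧
    ∀ (n : ℕ) (ω : Conf E),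
      (C n)⁻¹ ≤ (μ (cylPt ω n)).toReal / Real.exp (birk φ n ω - n * P) ∧
      (μ (cylPt ω n)).toReal / Real.exp (birk φ n ω - n * P) ≤ C n

/-! With `I i = ∫ φ (S^i (𝐚_{-∞}^{-1} ω_0^∞)) dτ(ω)`, the configuration `𝐚_{-∞}^{0} ω_1^∞` is
`S⁻¹ (𝐚_{-∞}^{-1} (Sω)_0^∞)`, so by shift invariance the `i`-th summand integrates to
`I i - I (i - 1)` and the sum telescopes to `I n - I (-n - 1)`. A continuous function on the
compact space `E^ℤ` is uniformly local, i.e. nearly determined by a finite window of coordinates.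
On the window `[-N, N]`, `S^n (𝐚_{-∞}^{-1} ω_0^∞)` agrees with `S^n ω` and
`S^{-n-1} (𝐚_{-∞}^{-1} ω_0^∞)` agrees with `𝐚` as soon as `n ≥ N`, uniformly in `ω`; hence
`I n → ∫ φ dτ` and `I (-n - 1) → φ 𝐚`. -/

/-- `𝐚_{-∞}^{-1} ω_0^∞`. -/
def fillNeg (a : E) (ω : Conf E) : Conf E := fun k => if k < 0 then a else ω k

lemma continuous_shiftZ [TopologicalSpace E] (i : ℤ) : Continuous (shiftZ (E := E) i) :=
  continuous_pi fun k => continuous_apply (k + i)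

lemma continuous_fillNeg [TopologicalSpace E] (a : E) : Continuous (fillNeg a) :=
  continuous_pi fun k => by
    by_cases hk : k < 0
    · simpa [fillNeg, hk] using continuous_const
    · simpa [fillNeg, hk] using continuous_apply k

lemma continuous_shiftZ_fillNeg [TopologicalSpace E] (i : ℤ) (a : E) :
    Continuous fun ω => shiftZ i (fillNeg a ω) :=
  (continuous_shiftZ i).comp (continuous_fillNeg a)

lemma shiftZ_fillNonpos (a : E) (i : ℤ) (ω : Conf E) :
    shiftZ i (fun k => if k ≤ 0 then a else ω k) = shiftZ (i - 1) (fillNeg a (shiftZ 1 ω)) := by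
  funext k
  simp only [shiftZ, fillNeg]
  split_ifs <;> first | rfl | omega | (congr 1; ring)

lemma sum_Icc_neg_sub_sub_one {G : Type*} [AddCommGroup G] (f : ℤ → G) (n : ℕ) :
    ∑ i ∈ Finset.Icc (-(n : ℤ)) n, (f i - f (i - 1)) = f n - f (-n - 1) := by
  induction n with
  | zero => simp
  | succ n ih =>
    have hIcc : Finset.Icc (-((n + 1 : ℕ) : ℤ)) ((n + 1 : ℕ) : ℤ) =
        insert (-(n : ℤ) - 1) (insert ((n : ℤ) + 1) (Finset.Icc (-(n : ℤ)) n)) := by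
      ext i
      simp only [Finset.mem_Icc, Finset.mem_insert]
      omega
    rw [hIcc, Finset.sum_insert (by simp only [Finset.mem_insert, Finset.mem_Icc]; omega),
      Finset.sum_insert (by simp only [Finset.mem_Icc]; omega), ih]
    push_cast
    ring_nf
    abel

lemma exists_abs_sub_lt_of_eqOn_Icc [TopologicalSpace E] [CompactSpace E] [T2Space E]
    {φ : Conf E → ℝ} (hφ : Continuous φ) {ε : ℝ} (hε : 0 < ε) :
    ∃ N : ℕ, ∀ x y : Conf E, Set.EqOn x y (Set.Icc (-(N : ℤ)) N) → |φ x - φ y| < ε := by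
  set C : Set (Conf E × Conf E) := {p | ε ≤ |φ p.1 - φ p.2|}
  set D : ℕ → Set (Conf E × Conf E) := fun N => {p | Set.EqOn p.1 p.2 (Set.Icc (-(N : ℤ)) N)}
  have hC : IsCompact C :=
    (isClosed_le continuous_const
      (continuous_abs.comp ((hφ.comp continuous_fst).sub (hφ.comp continuous_snd)))).isCompact
  have hD : ∀ N, IsClosed (D N) := fun N => by
    simp only [D, Set.EqOn, Set.ofPred_forall]
    exact isClosed_iInter fun k => isClosed_iInter fun _ =>
      isClosed_eq ((continuous_apply k).comp continuous_fst)
        ((continuous_apply k).comp continuous_snd)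
  have hD_dir : Directed (· ⊇ ·) D := fun N M =>
    ⟨max N M, fun _ hp _ hk => hp (Set.Icc_subset_Icc (by omega) (by omega) hk),
      fun _ hp _ hk => hp (Set.Icc_subset_Icc (by omega) (by omega) hk)⟩
  have hCD : C ∩ ⋂ N, D N = ∅ := by
    refine Set.eq_empty_of_forall_notMem fun p ⟨hpC, hpD⟩ => ?_
    have hp : p.1 = p.2 := funext fun k =>
      Set.mem_iInter.1 hpD k.natAbs (Set.mem_Icc.2 ⟨by omega, by omega⟩)
    simp only [C, Set.mem_ofPred_eq, hp, sub_self, abs_zero] at hpC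
    exact hε.not_ge hpC
  obtain ⟨N, hN⟩ := hC.elim_directed_family_closed D hD hCD hD_dir
  refine ⟨N, fun x y hxy => not_le.1 fun hle => ?_⟩
  exact (Set.eq_empty_iff_forall_notMem.1 hN) (x, y) ⟨hle, hxy⟩

lemma tendstoUniformly_sub_of_eqOn_Icc [TopologicalSpace E] [CompactSpace E]
    [T2Space E] {ι α : Type*} {l : Filter ι} {φ : Conf E → ℝ} (hφ : Continuous φ)
    {x y : ι → α → Conf E}
    (hxy : ∀ N : ℕ, ∀ᶠ i in l, ∀ ω, Set.EqOn (x i ω) (y i ω) (Set.Icc (-(N : ℤ)) N)) :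
    TendstoUniformly (fun i ω => φ (x i ω) - φ (y i ω)) 0 l := by
  refine Metric.tendstoUniformly_iff.2 fun ε hε => ?_
  obtain ⟨N, hN⟩ := exists_abs_sub_lt_of_eqOn_Icc hφ hε
  filter_upwards [hxy N] with i hi ω
  simpa [Real.dist_eq, abs_sub_comm] using hN _ _ (hi ω)

lemma tendsto_integral_of_tendstoUniformly_zero {α ι : Type*} [MeasurableSpace α]
    {μ : Measure α} [IsFiniteMeasure μ] {l : Filter ι} {F : ι → α → ℝ}
    (hF : TendstoUniformly F 0 l) : Tendsto (fun i => ∫ ω, F i ω ∂μ) l (𝓝 0) := by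
  refine Metric.tendsto_nhds.2 fun ε hε => ?_
  have hδ : 0 < ε / (μ.real Set.univ + 1) := by positivity
  filter_upwards [Metric.tendstoUniformly_iff.1 hF _ hδ] with i hi
  have hbound : ‖∫ ω, F i ω ∂μ‖ ≤ ε / (μ.real Set.univ + 1) * μ.real Set.univ :=
    norm_integral_le_of_norm_le_const <| Eventually.of_forall fun ω => by
      simpa [dist_comm] using (hi ω).le
  rw [dist_zero_right]
  refine hbound.trans_lt ?_
  rw [div_mul_eq_mul_div, div_lt_iff₀ (by positivity)]
  nlinarith [measureReal_nonneg (μ := μ) (s := Set.univ)]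

lemma measurable_shiftZ [MeasurableSpace E] (i : ℤ) : Measurable (shiftZ (E := E) i) :=
  measurable_pi_lambda _ fun k => measurable_pi_apply (k + i)

lemma shiftZ_one_iterate (n : ℕ) : (shiftZ (E := E) 1)^[n] = shiftZ n := by
  induction n with
  | zero => funext ω k; simp [shiftZ]
  | succ n ih =>
    rw [Function.iterate_succ', ih]
    funext ω k
    simp only [Function.comp_apply, shiftZ]
    push_cast
    ring_nf

lemma ShiftInv.integral_comp_shiftZ_natCast [MeasurableSpace E] {τ : Measure (Conf E)}
    (hτ : ShiftInv τ) {f : Conf E → ℝ} (hf : AEStronglyMeasurable f τ) (n : ℕ) :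
    ∫ ω, f (shiftZ n ω) ∂τ = ∫ ω, f ω ∂τ := by
  have hn : MeasurePreserving (shiftZ (E := E) n) τ τ := by
    simpa [shiftZ_one_iterate] using (MeasurePreserving.mk (measurable_shiftZ 1) hτ).iterate n
  rw [← integral_map hn.measurable.aemeasurable (by rwa [hn.map_eq]), hn.map_eq]

section Integrals

variable [TopologicalSpace E] [CompactSpace E] [MeasurableSpace E] [OpensMeasurableSpace (Conf E)]
  {τ : Measure (Conf E)} [IsFiniteMeasure τ]

lemma integrable_of_continuous {f : Conf E → ℝ} (hf : Continuous f) : Integrable f τ :=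
  hf.integrable_of_hasCompactSupport (HasCompactSupport.of_compactSpace f)

lemma integral_sum_Icc_sub_comp_shiftZ_one {g : ℤ → Conf E → ℝ} (hg : ∀ i, Continuous (g i))
    (hτ : ShiftInv τ) (n : ℕ) :
    ∫ ω, ∑ i ∈ Finset.Icc (-(n : ℤ)) n, (g i ω - g (i - 1) (shiftZ 1 ω)) ∂τ =
      ∫ ω, g n ω ∂τ - ∫ ω, g (-n - 1) ω ∂τ := by
  have hshift := continuous_shiftZ (E := E) 1
  rw [integral_finsetSum _ fun i _ =>
    integrable_of_continuous (f := fun ω => g i ω - g (i - 1) (shiftZ 1 ω))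
      ((hg i).sub ((hg (i - 1)).comp hshift))]
  rw [← sum_Icc_neg_sub_sub_one (fun i => ∫ ω, g i ω ∂τ)]
  refine Finset.sum_congr rfl fun i _ => ?_
  rw [integral_sub (integrable_of_continuous (hg i))
    (integrable_of_continuous ((hg (i - 1)).comp' hshift))]
  simpa using hτ.integral_comp_shiftZ_natCast (hg (i - 1)).aestronglyMeasurable 1

variable [T2Space E] {φ : Conf E → ℝ}

lemma tendsto_integral_comp_shiftZ_fillNeg_atTop (hφ : Continuous φ) (hτ : ShiftInv τ) (a : E) :
    Tendsto (fun n : ℕ => ∫ ω, φ (shiftZ n (fillNeg a ω)) ∂τ) atTop (𝓝 (∫ ω, φ ω ∂τ)) := by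
  have hdiff : Tendsto (fun n : ℕ => ∫ ω, (φ (shiftZ n (fillNeg a ω)) - φ (shiftZ n ω)) ∂τ)
      atTop (𝓝 0) :=
    tendsto_integral_of_tendstoUniformly_zero <| tendstoUniformly_sub_of_eqOn_Icc hφ fun N =>
      (eventually_ge_atTop N).mono fun n hn ω k hk => by
        have : ¬ k + n < 0 := by simp only [Set.mem_Icc] at hk; omega
        simp [shiftZ, fillNeg, this]
  refine tendsto_sub_nhds_zero_iff.1 (hdiff.congr fun n => ?_)
  rw [integral_sub (integrable_of_continuous (hφ.comp' (continuous_shiftZ_fillNeg n a)))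
    (integrable_of_continuous (hφ.comp' (continuous_shiftZ _))),
    hτ.integral_comp_shiftZ_natCast hφ.aestronglyMeasurable]

lemma tendsto_integral_comp_shiftZ_fillNeg_atBot [IsProbabilityMeasure τ] (hφ : Continuous φ)
    (a : E) :
    Tendsto (fun i : ℤ => ∫ ω, φ (shiftZ i (fillNeg a ω)) ∂τ) atBot (𝓝 (φ fun _ => a)) := by
  have hdiff : Tendsto (fun i : ℤ => ∫ ω, (φ (shiftZ i (fillNeg a ω)) - φ fun _ => a) ∂τ)
      atBot (𝓝 0) :=
    tendsto_integral_of_tendstoUniformly_zero <|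
      tendstoUniformly_sub_of_eqOn_Icc (y := fun _ _ _ => a) hφ fun N =>
        (eventually_le_atBot (-(N : ℤ) - 1)).mono fun i hi ω k hk => by
          have : k + i < 0 := by simp only [Set.mem_Icc] at hk; omega
          simp [shiftZ, fillNeg, this]
  refine tendsto_sub_nhds_zero_iff.1 (hdiff.congr fun i => ?_)
  rw [integral_sub (integrable_of_continuous (hφ.comp' (continuous_shiftZ_fillNeg i a)))
    (integrable_const _), integral_const, probReal_univ, one_smul]

end Integrals

theorem integral_telescoping_limit_general [Fintype E] [TopologicalSpace E] [DiscreteTopology E]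
    [MeasurableSpace E] [MeasurableSingletonClass E]
    (φ : Conf E → ℝ) (hφc : Continuous φ) (a : E)
    (τ : Measure (Conf E)) (hτp : IsProbabilityMeasure τ) (hτi : ShiftInv τ) :
    Tendsto (fun n : ℕ =>
        ∫ ω, (∑ i ∈ Finset.Icc (-(n : ℤ)) (n : ℤ),
          (φ (shiftZ i (fun k => if k < 0 then a else ω k)) -
           φ (shiftZ i (fun k => if k ≤ 0 then a else ω k)))) ∂τ)
      atTop (𝓝 ((∫ ω, φ ω ∂τ) - φ (fun _ => a))) := by
  let I : ℤ → ℝ := fun i => ∫ ω, φ (shiftZ i (fillNeg a ω)) ∂τ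
  have hsum (n : ℕ) : ∫ ω, (∑ i ∈ Finset.Icc (-(n : ℤ)) (n : ℤ),
      (φ (shiftZ i (fillNeg a ω)) - φ (shiftZ i (fun k => if k ≤ 0 then a else ω k)))) ∂τ =
        I n - I (-n - 1) := by
    simp only [shiftZ_fillNonpos]
    exact integral_sum_Icc_sub_comp_shiftZ_one
      (fun i => hφc.comp' (continuous_shiftZ_fillNeg i a)) hτi n
  have hneg : Tendsto (fun n : ℕ => I (-n - 1)) atTop (𝓝 (φ fun _ => a)) :=
    (tendsto_integral_comp_shiftZ_fillNeg_atBot hφc a).comp <|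
      tendsto_atBot_add_const_right _ (-1)
        (tendsto_neg_atTop_atBot.comp tendsto_natCast_atTop_atTop)
  exact ((tendsto_integral_comp_shiftZ_fillNeg_atTop hφc hτi a).sub hneg).congr
    fun n => (hsum n).symm

/-- For a continuous `φ` and a shift-invariant Borel probability
measure `τ`, `lim_n ∫ ∑_{i=-n}^{n} (φ(S^i(𝐚_{-∞}^{-1}ω_0^∞)) - φ(S^i(𝐚_{-∞}^{0}ω_1^∞))) dτ(ω)
= ∫ φ dτ - φ(𝐚)`. -/
theorem integral_telescoping_limit [Fintype E] [Nonempty E] [TopologicalSpace E] [DiscreteTopology E]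
    [MeasurableSpace E] [MeasurableSingletonClass E]
    (φ : Conf E → ℝ) (hφc : Continuous φ) (a : E)
    (τ : Measure (Conf E)) (hτp : IsProbabilityMeasure τ) (hτi : ShiftInv τ) :
    Tendsto (fun n : ℕ =>
        ∫ ω, (∑ i ∈ Finset.Icc (-(n : ℤ)) (n : ℤ),
          (φ (shiftZ i (fun k => if k < 0 then a else ω k)) -
           φ (shiftZ i (fun k => if k ≤ 0 then a else ω k)))) ∂τ)
      atTop (𝓝 ((∫ ω, φ ω ∂τ) - φ (fun _ => a))) :=
  integral_telescoping_limit_general φ hφc a τ hτp hτi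

end GP
end

section
/- Let γ be a translation-invariant Gibbsian specification on Ω = E^ℤ and φ_γ the associated potential. Then every S-invariant DLR-Gibbs measure μ ∈ G_S(γ) is weak Bowen-Gibbs with respect to φ_γ with constant P = P(φ_γ): there is a sequence C_n > 0 with (1/n) log C_n → 0 such that C_n^{-1} ≤ μ([ω_0^{n-1}]) / exp(S_nφ_γ(ω) − nP(φ_γ)) ≤ C_n for all n ∈ ℕ and ω ∈ Ω. -/
open Filter Topology MeasureTheory

namespace GP

variable {E : Type*}

/-!
Write `g = log γ_{0}`, so that `φ_γ(ω) = g(𝐚 ω_0 ω_1^∞) - g(𝐚 a ω_1^∞)`. Consistency and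
translation invariance let one rewrite the configuration inside `Λ_n = [0, n)` to `a` one site
at a time; each step changes `log γ_{Λ_n}` by a difference of two values of `g ∘ S^k`, which is
`φ_γ(S^k ·)` up to the variation of `g` on the window seen from site `k`. Telescoping, uniformly
in the boundary condition, gives `γ_{Λ_n}(ω_{Λ_n} | η) ≈ exp (S_n φ_γ(ω)) / Z_n` up to a factor
`exp (O(∑_{j<n} var_j g))`, and the DLR equation transfers this to `μ([ω_0^{n-1}])`. Since `γ`
is continuous on the compact space `E^ℤ`, `var_j g → 0`, so the error is `o(n)` (Cesàro), while
`(1/n) log Z_n → P(φ_γ)` by subadditivity of `log Z_n`.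
-/

-- Summing `p i = exp (K + b i ± c)` over `i` pins down `exp (-K) = ∑ j, exp (b j)` up to a
-- factor `exp (±c)`.
lemma abs_log_sub_log_sum_exp_le {ι : Type*} [Fintype ι] {p b : ι → ℝ} {K c : ℝ}
    (hp : ∀ i, 0 < p i) (hsum : ∑ i, p i = 1) (h : ∀ i, |Real.log (p i) - K - b i| ≤ c)
    (i : ι) : |Real.log (p i) - (b i - Real.log (∑ j, Real.exp (b j)))| ≤ 2 * c := by
  have hZ : 0 < ∑ j, Real.exp (b j) :=
    Finset.sum_pos (fun j _ => Real.exp_pos _) ⟨i, Finset.mem_univ i⟩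
  have hup : 1 ≤ Real.exp (K + c) * ∑ j, Real.exp (b j) := by
    rw [← hsum, Finset.mul_sum]
    refine Finset.sum_le_sum fun j _ => ?_
    rw [← Real.exp_add, ← Real.exp_log (hp j)]
    exact Real.exp_le_exp.2 (by linarith [(abs_le.1 (h j)).2])
  have hlow : Real.exp (K - c) * ∑ j, Real.exp (b j) ≤ 1 := by
    rw [← hsum, Finset.mul_sum]
    refine Finset.sum_le_sum fun j _ => ?_
    rw [← Real.exp_add, ← Real.exp_log (hp j)]
    exact Real.exp_le_exp.2 (by linarith [(abs_le.1 (h j)).1])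
  have l1 := Real.log_le_log one_pos hup
  have l2 := Real.log_le_log (by positivity) hlow
  rw [Real.log_mul (Real.exp_pos _).ne' hZ.ne', Real.log_exp, Real.log_one] at l1 l2
  have := abs_le.1 (h i)
  rw [abs_le]
  constructor <;> linarith

lemma abs_log_sum_sub_log_sum_le {ι : Type*} [Fintype ι] [Nonempty ι] {f g : ι → ℝ} {c : ℝ}
    (hf : ∀ i, 0 < f i) (hg : ∀ i, 0 < g i) (h : ∀ i, |Real.log (f i) - Real.log (g i)| ≤ c) :
    |Real.log (∑ i, f i) - Real.log (∑ i, g i)| ≤ c := by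
  have key : ∀ {u v : ι → ℝ}, (∀ i, 0 < u i) → (∀ i, 0 < v i) →
      (∀ i, Real.log (u i) ≤ Real.log (v i) + c) →
      Real.log (∑ i, u i) ≤ Real.log (∑ i, v i) + c := fun {u v} hu hv huv => by
    have hle : ∑ i, u i ≤ Real.exp c * ∑ i, v i := by
      rw [Finset.mul_sum]
      refine Finset.sum_le_sum fun i _ => ?_
      rw [← Real.exp_log (hu i), ← Real.exp_log (hv i), ← Real.exp_add]
      exact Real.exp_le_exp.2 (by linarith [huv i])
    have hpos : 0 < ∑ i, v i := Finset.sum_pos (fun i _ => hv i) Finset.univ_nonempty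
    have := Real.log_le_log (Finset.sum_pos (fun i _ => hu i) Finset.univ_nonempty) hle
    rwa [Real.log_mul (Real.exp_pos _).ne' hpos.ne', Real.log_exp, add_comm] at this
  have h1 := key hf hg fun i => by linarith [le_of_abs_le (h i)]
  have h2 := key hg hf fun i => by linarith [neg_le_of_abs_le (h i)]
  rw [abs_le]
  constructor <;> linarith

lemma abs_log_integral_sub_le {X : Type*} [MeasurableSpace X] {μ : Measure X}
    [IsProbabilityMeasure μ] {G : X → ℝ} {m c : ℝ} (hG : AEStronglyMeasurable G μ)
    (hpos : ∀ x, 0 < G x) (h : ∀ x, |Real.log (G x) - m| ≤ c) :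
    0 < ∫ x, G x ∂μ ∧ |Real.log (∫ x, G x ∂μ) - m| ≤ c := by
  have hlow : ∀ x, Real.exp (m - c) ≤ G x := fun x => by
    rw [← Real.exp_log (hpos x)]
    exact Real.exp_le_exp.2 (by linarith [neg_le_of_abs_le (h x)])
  have hup : ∀ x, G x ≤ Real.exp (m + c) := fun x => by
    rw [← Real.exp_log (hpos x)]
    exact Real.exp_le_exp.2 (by linarith [le_of_abs_le (h x)])
  have hint : Integrable G μ := Integrable.of_bound hG _ <| ae_of_all _ fun x => by
    rw [Real.norm_of_nonneg (hpos x).le]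
    exact hup x
  have hI1 : Real.exp (m - c) ≤ ∫ x, G x ∂μ := by
    simpa using integral_mono (integrable_const _) hint hlow
  have hI2 : ∫ x, G x ∂μ ≤ Real.exp (m + c) := by
    simpa using integral_mono hint (integrable_const _) hup
  have hIpos := (Real.exp_pos _).trans_le hI1
  have l1 := Real.log_le_log (Real.exp_pos _) hI1
  have l2 := Real.log_le_log hIpos hI2
  rw [Real.log_exp] at l1 l2
  exact ⟨hIpos, abs_le.2 ⟨by linarith, by linarith⟩⟩

lemma shiftZ_shiftZ (i j : ℤ) (ω : Conf E) : shiftZ i (shiftZ j ω) = shiftZ (j + i) ω := by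
  funext k
  exact congrArg ω (by ring)

@[simp]
lemma shiftZ_zero (ω : Conf E) : shiftZ 0 ω = ω := by
  funext k
  simp [shiftZ]

lemma birk_add (φ : Conf E → ℝ) (m n : ℕ) (ω : Conf E) :
    birk φ (m + n) ω = birk φ m ω + birk φ n (shiftZ m ω) := by
  simp only [birk, Finset.sum_range_add, shiftZ_shiftZ, Nat.cast_add]

lemma abs_birk_sub_le {φ : Conf E → ℝ} {v : ℕ → ℝ}
    (hv : ∀ m (ω ω' : Conf E), (∀ j : ℕ, j ≤ m → ω j = ω' j) → |φ ω - φ ω'| ≤ v m)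
    {n : ℕ} {ω ω' : Conf E} (h : ∀ j : ℕ, j < n → ω j = ω' j) :
    |birk φ n ω - birk φ n ω'| ≤ ∑ j ∈ Finset.range n, v j := by
  rw [birk, birk, ← Finset.sum_sub_distrib, ← Finset.sum_range_reflect v]
  refine (Finset.abs_sum_le_sum_abs _ _).trans (Finset.sum_le_sum fun k hk => hv _ _ _ ?_)
  intro j hj
  have hk := Finset.mem_range.1 hk
  exact_mod_cast h (j + k) (by omega)

lemma NonNull.pos {γ : Finset ℤ → Conf E → ℝ} (hNN : NonNull γ) (Λ : Finset ℤ) (ω : Conf E) :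
    0 < γ Λ ω :=
  let ⟨_, hc, h⟩ := hNN Λ
  hc.trans_le (h ω)

lemma IsSpecification.log_sub_log_eq [Fintype E] {γ : Finset ℤ → Conf E → ℝ}
    (hS : IsSpecification γ) (hNN : NonNull γ) {V Λ : Finset ℤ} (hVΛ : V ⊆ Λ)
    {ω ω' : Conf E} (hω : ∀ k ∉ V, ω k = ω' k) :
    Real.log (γ Λ ω) - Real.log (γ Λ ω') = Real.log (γ V ω) - Real.log (γ V ω') := by
  have hovr : ∀ η, ovr V η ω = ovr V η ω' := fun η => by
    funext k
    by_cases h : k ∈ V <;> simp [ovr, h, hω]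
  rw [hS.2.2 V Λ hVΛ ω, hS.2.2 V Λ hVΛ ω', Finset.sum_congr rfl fun η _ => by rw [hovr η]]
  have hZ : 0 < ∑ η : {k // k ∈ V} → E, γ Λ (ovr V η ω') :=
    Finset.sum_pos (fun η _ => hNN.pos _ _) ⟨_, Finset.mem_univ fun s : {k // k ∈ V} => ω' s⟩
  rw [Real.log_mul hZ.ne' (hNN.pos _ _).ne', Real.log_mul hZ.ne' (hNN.pos _ _).ne']
  ring

lemma SpecTI.singleton_natCast {γ : Finset ℤ → Conf E → ℝ} (hTI : SpecTI γ) (k : ℕ)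
    (ω : Conf E) : γ {(k : ℤ)} ω = γ {0} (shiftZ k ω) := by
  induction k generalizing ω with
  | zero => simp only [Nat.cast_zero, shiftZ_zero]
  | succ k ih =>
    have := hTI {(k : ℤ)} ω
    rw [Finset.image_singleton, ih, shiftZ_shiftZ] at this
    rw [Nat.cast_succ, this, add_comm]

noncomputable def variation (g : Conf E → ℝ) (m : ℕ) : ℝ :=
  sSup ((fun p : Conf E × Conf E => |g p.1 - g p.2|) ''
    {p | ∀ k : ℤ, |k| ≤ m → p.1 k = p.2 k})

lemma variation_nonneg (g : Conf E → ℝ) (m : ℕ) : 0 ≤ variation g m :=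
  Real.sSup_nonneg <| by
    rintro _ ⟨p, _, rfl⟩
    exact abs_nonneg _

section Variation

variable [TopologicalSpace E] [CompactSpace E] {g : Conf E → ℝ}

lemma abs_sub_le_variation (hg : Continuous g) {m : ℕ} {ω ω' : Conf E}
    (h : ∀ k : ℤ, |k| ≤ m → ω k = ω' k) : |g ω - g ω'| ≤ variation g m :=
  le_csSup ((isCompact_range (by fun_prop)).bddAbove.mono (Set.image_subset_range _ _))
    ⟨(ω, ω'), h, rfl⟩

/-- Uniform continuity on the compact space `E^ℤ`: the closed sets of pairs that agree on
`[-m, m]` but whose `g`-values differ by at least `ε` decrease to `∅`, so one of them is empty. -/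
lemma tendsto_variation_zero [T2Space E] (hg : Continuous g) :
    Tendsto (variation g) atTop (𝓝 0) := by
  rw [Metric.tendsto_atTop]
  intro ε hε
  set K : ℕ → Set (Conf E × Conf E) := fun m =>
    {p | ∀ k : ℤ, |k| ≤ m → p.1 k = p.2 k} ∩ {p | ε / 2 ≤ |g p.1 - g p.2|}
  have hKclosed : ∀ m, IsClosed (K m) := fun m => by
    refine IsClosed.inter ?_ (isClosed_le continuous_const (by fun_prop))
    simp only [Set.ofPred_forall]
    exact isClosed_iInter fun k => isClosed_iInter fun _ => isClosed_eq (by fun_prop) (by fun_prop)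
  obtain ⟨m, hm⟩ : ∃ m, K m = ∅ := by
    by_contra! hne
    obtain ⟨p, hp⟩ := IsCompact.nonempty_iInter_of_sequence_nonempty_isCompact_isClosed K
      (fun m p hp => ⟨fun k hk => hp.1 k (hk.trans (by omega)), hp.2⟩) hne (hKclosed 0).isCompact hKclosed
    have hp' := Set.mem_iInter.1 hp
    have heq : p.1 = p.2 := funext fun k => (hp' k.natAbs).1 k (by simp)
    have : ε / 2 ≤ |g p.1 - g p.2| := (hp' 0).2
    rw [heq, sub_self, abs_zero] at this
    linarith
  refine ⟨m, fun m' hm' => ?_⟩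
  have hle : variation g m' ≤ ε / 2 := Real.sSup_le (by
    rintro _ ⟨p, hp, rfl⟩
    by_contra! hlt
    exact (Set.eq_empty_iff_forall_notMem.1 hm) p
      ⟨fun k hk => hp k (hk.trans (by exact_mod_cast hm')), hlt.le⟩) (by positivity)
  rw [Real.dist_eq, sub_zero, abs_of_nonneg (variation_nonneg g m')]
  linarith

end Variation

noncomputable def sumVariation (g : Conf E → ℝ) (n : ℕ) : ℝ :=
  ∑ j ∈ Finset.range n, variation g j

lemma tendsto_sumVariation_div [TopologicalSpace E] [CompactSpace E] [T2Space E]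
    {g : Conf E → ℝ} (hg : Continuous g) :
    Tendsto (fun n : ℕ => sumVariation g n / n) atTop (𝓝 0) :=
  (tendsto_variation_zero hg).cesaro.congr fun n => by rw [sumVariation, div_eq_inv_mul]

noncomputable def logSingle (γ : Finset ℤ → Conf E → ℝ) (ω : Conf E) : ℝ :=
  Real.log (γ {0} ω)

section Potential

variable {γ : Finset ℤ → Conf E → ℝ}

lemma phiOf_eq_sub (hNN : NonNull γ) (a : E) (ω : Conf E) :
    phiOf γ a ω = logSingle γ (bca a ω (ω 0)) - logSingle γ (bca a ω a) :=
  Real.log_div (hNN.pos _ _).ne' (hNN.pos _ _).ne'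

variable [TopologicalSpace E]

lemma continuous_bca (a : E) {f : Conf E → E} (hf : Continuous f) :
    Continuous fun ω => bca a ω (f ω) :=
  continuous_pi fun k => by
    unfold bca
    split_ifs <;> fun_prop

lemma continuous_phiOf (hNN : NonNull γ) (hg : Continuous (logSingle γ)) (a : E) :
    Continuous (phiOf γ a) := by
  rw [funext (phiOf_eq_sub hNN a)]
  exact (hg.comp (continuous_bca a (continuous_apply 0))).sub
    (hg.comp (continuous_bca a continuous_const))

variable [CompactSpace E]

lemma abs_phiOf_sub_le (hNN : NonNull γ) (hg : Continuous (logSingle γ)) (a : E) {m : ℕ}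
    {ω ω' : Conf E} (h : ∀ j : ℕ, j ≤ m → ω j = ω' j) :
    |phiOf γ a ω - phiOf γ a ω'| ≤ 2 * variation (logSingle γ) m := by
  have hbca : ∀ b : E, ∀ k : ℤ, |k| ≤ m → bca a ω b k = bca a ω' b k := by
    intro b k hk
    rw [abs_le] at hk
    simp only [bca]
    split_ifs
    · rfl
    · rfl
    · have := h k.toNat (by omega)
      rwa [Int.toNat_of_nonneg (by omega)] at this
  have h0 : ω 0 = ω' 0 := by exact_mod_cast h 0 (Nat.zero_le m)
  have h1 := abs_sub_le_variation hg (hbca (ω 0))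
  have h2 := abs_sub_le_variation hg (hbca a)
  rw [phiOf_eq_sub hNN, phiOf_eq_sub hNN, ← h0]
  rw [abs_le] at h1 h2 ⊢
  constructor <;> linarith

lemma abs_birk_phiOf_sub_le (hNN : NonNull γ) (hg : Continuous (logSingle γ)) (a : E) {n : ℕ}
    {ω ω' : Conf E} (h : ∀ j : ℕ, j < n → ω j = ω' j) :
    |birk (phiOf γ a) n ω - birk (phiOf γ a) n ω'| ≤ 2 * sumVariation (logSingle γ) n := by
  rw [sumVariation, Finset.mul_sum]
  exact abs_birk_sub_le (fun _ _ _ => abs_phiOf_sub_le hNN hg a) h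

end Potential

section Telescoping

variable {γ : Finset ℤ → Conf E → ℝ}

noncomputable def interp (a : E) {n : ℕ} (ζ : {k // k ∈ Finset.Ico 0 (n : ℤ)} → E)
    (η : Conf E) (t : ℤ) : Conf E :=
  ovr _ (fun s => if s.1 < t then a else ζ s) η

variable (a : E) {n : ℕ} (ζ : {k // k ∈ Finset.Ico 0 (n : ℤ)} → E) (η : Conf E)

lemma interp_zero : interp a ζ η 0 = ovr _ ζ η := by
  funext k
  by_cases hk : k ∈ Finset.Ico 0 (n : ℤ)
  · simp [interp, ovr, hk, (Finset.mem_Ico.1 hk).1]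
  · simp [interp, ovr, hk]

lemma interp_natCast : interp a ζ η n = ovr (Finset.Ico 0 (n : ℤ)) (fun _ => a) η := by
  funext k
  by_cases hk : k ∈ Finset.Ico 0 (n : ℤ)
  · simp [interp, ovr, hk, (Finset.mem_Ico.1 hk).2]
  · simp [interp, ovr, hk]

lemma interp_eq_interp_add_one {t j : ℤ} (hj : j ≠ t) :
    interp a ζ η t j = interp a ζ η (t + 1) j := by
  simp only [interp, ovr]
  split_ifs <;> first | rfl | omega

lemma shiftZ_interp_eq_bca {m k : ℕ} (hmk : m ≤ k) (hkm : k + m < n) {j : ℤ} (hj : |j| ≤ m) :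
    shiftZ k (interp a ζ η k) j
        = bca a (shiftZ k (ovr _ ζ fun _ => a)) (shiftZ k (ovr _ ζ fun _ => a) 0) j ∧
      shiftZ k (interp a ζ η (k + 1)) j = bca a (shiftZ k (ovr _ ζ fun _ => a)) a j := by
  rw [abs_le] at hj
  have hmem : j + k ∈ Finset.Ico 0 (n : ℤ) := Finset.mem_Ico.2 ⟨by omega, by omega⟩
  simp only [shiftZ, interp, ovr, bca, dif_pos hmem, zero_add,
    dif_pos (Finset.mem_Ico.2 ⟨by omega, by omega⟩ : (k : ℤ) ∈ Finset.Ico 0 (n : ℤ))]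
  constructor <;> split_ifs <;> first | rfl | omega | (subst j; simp)

variable [Fintype E] [TopologicalSpace E] [CompactSpace E]

lemma abs_log_interp_sub_le (hS : IsSpecification γ) (hNN : NonNull γ) (hTI : SpecTI γ)
    (hg : Continuous (logSingle γ)) {k : ℕ} (hk : k < n) :
    |Real.log (γ (Finset.Ico 0 (n : ℤ)) (interp a ζ η k))
        - Real.log (γ (Finset.Ico 0 (n : ℤ)) (interp a ζ η (k + 1)))
        - phiOf γ a (shiftZ k (ovr _ ζ fun _ => a))|
      ≤ 2 * (variation (logSingle γ) k + variation (logSingle γ) (n - 1 - k)) := by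
  have hsub : {(k : ℤ)} ⊆ Finset.Ico 0 (n : ℤ) :=
    Finset.singleton_subset_iff.2 (Finset.mem_Ico.2 ⟨by omega, by omega⟩)
  rw [hS.log_sub_log_eq hNN hsub fun j hj =>
      interp_eq_interp_add_one a ζ η (Finset.notMem_singleton.1 hj),
    hTI.singleton_natCast, hTI.singleton_natCast, phiOf_eq_sub hNN]
  have hagree := fun (j : ℤ) (hj : |j| ≤ ((min k (n - 1 - k) : ℕ) : ℤ)) =>
    shiftZ_interp_eq_bca a ζ η (min_le_left _ _) (by omega) hj
  have h1 := abs_sub_le_variation hg fun j hj => (hagree j hj).1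
  have h2 := abs_sub_le_variation hg fun j hj => (hagree j hj).2
  have hmin : variation (logSingle γ) (min k (n - 1 - k))
      ≤ variation (logSingle γ) k + variation (logSingle γ) (n - 1 - k) := by
    rcases min_choice k (n - 1 - k) with h | h <;> rw [h] <;>
      linarith [variation_nonneg (logSingle γ) k, variation_nonneg (logSingle γ) (n - 1 - k)]
  change |logSingle γ _ - logSingle γ _ - _| ≤ _
  rw [abs_le] at h1 h2 ⊢
  constructor <;> linarith

lemma abs_log_gamma_sub_birk_le (hS : IsSpecification γ) (hNN : NonNull γ) (hTI : SpecTI γ)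
    (hg : Continuous (logSingle γ)) :
    |Real.log (γ (Finset.Ico 0 (n : ℤ)) (ovr _ ζ η))
        - Real.log (γ (Finset.Ico 0 (n : ℤ)) (ovr (Finset.Ico 0 (n : ℤ)) (fun _ => a) η))
        - birk (phiOf γ a) n (ovr _ ζ fun _ => a)|
      ≤ 4 * sumVariation (logSingle γ) n := by
  set F : ℕ → ℝ := fun k => Real.log (γ (Finset.Ico 0 (n : ℤ)) (interp a ζ η k))
  have hF0 : F 0 = Real.log (γ (Finset.Ico 0 (n : ℤ)) (ovr _ ζ η)) := by simp [F, interp_zero]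
  have hFn :
      F n = Real.log (γ (Finset.Ico 0 (n : ℤ)) (ovr (Finset.Ico 0 (n : ℤ)) (fun _ => a) η)) := by
    simp [F, interp_natCast]
  rw [← hF0, ← hFn, ← Finset.sum_range_sub', birk, ← Finset.sum_sub_distrib]
  calc _ ≤ ∑ k ∈ Finset.range n,
        2 * (variation (logSingle γ) k + variation (logSingle γ) (n - 1 - k)) :=
        (Finset.abs_sum_le_sum_abs _ _).trans <| Finset.sum_le_sum fun k hk => by
          simpa [F] using abs_log_interp_sub_le a ζ η hS hNN hTI hg (Finset.mem_range.1 hk)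
    _ = 4 * sumVariation (logSingle γ) n := by
        rw [sumVariation, Finset.mul_sum]
        simp only [mul_add, Finset.sum_add_distrib,
          Finset.sum_range_reflect (fun j => 2 * variation (logSingle γ) j) n]
        rw [← Finset.sum_add_distrib]
        exact Finset.sum_congr rfl fun _ _ => by ring

end Telescoping

def wordEquiv (n : ℕ) : (Fin n → E) ≃ ({k // k ∈ Finset.Ico 0 (n : ℤ)} → E) where
  toFun w s := w ⟨s.1.toNat, by have := Finset.mem_Ico.1 s.2; omega⟩
  invFun ζ j := ζ ⟨j, Finset.mem_Ico.2 ⟨by omega, by omega⟩⟩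
  left_inv w := by
    funext j
    simp
  right_inv ζ := by
    funext s
    change ζ _ = ζ s
    congr
    exact Int.toNat_of_nonneg (Finset.mem_Ico.1 s.2).1

noncomputable def wordCfg (a : E) {n : ℕ} (w : Fin n → E) : Conf E :=
  ovr (Finset.Ico 0 (n : ℤ)) (wordEquiv n w) fun _ => a

lemma wordCfg_natCast (a : E) {n : ℕ} (w : Fin n → E) {j : ℕ} (hj : j < n) :
    wordCfg a w j = w ⟨j, hj⟩ := by
  simp [wordCfg, ovr, wordEquiv, hj]

lemma mem_cylW_iff (a : E) {n : ℕ} (w : Fin n → E) {ω : Conf E} :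
    ω ∈ cylW w ↔ ∀ j : ℕ, j < n → ω j = wordCfg a w j := by
  simp only [cylW, Set.mem_ofPred_eq, Fin.forall_iff]
  exact forall₂_congr fun j hj => by rw [wordCfg_natCast a w hj]

lemma wordCfg_mem_cylW (a : E) {n : ℕ} (w : Fin n → E) : wordCfg a w ∈ cylW w :=
  (mem_cylW_iff a w).2 fun _ _ => rfl

section Pressure

variable {φ : Conf E → ℝ} {M : ℝ}

noncomputable def cylSup (φ : Conf E → ℝ) {n : ℕ} (w : Fin n → E) : ℝ :=
  sSup ((fun ω => Real.exp (birk φ n ω)) '' cylW w)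

noncomputable def partitionSum [Fintype E] (φ : Conf E → ℝ) (n : ℕ) : ℝ :=
  ∑ w : Fin n → E, cylSup φ w

lemma abs_birk_le (hM : ∀ ω, |φ ω| ≤ M) (n : ℕ) (ω : Conf E) : |birk φ n ω| ≤ n * M :=
  (Finset.abs_sum_le_sum_abs _ _).trans <| by
    simpa using Finset.sum_le_sum fun k (_ : k ∈ Finset.range n) => hM (shiftZ k ω)

lemma exp_birk_le_cylSup (hM : ∀ ω, |φ ω| ≤ M) {n : ℕ} {w : Fin n → E} {ω : Conf E}
    (hω : ω ∈ cylW w) : Real.exp (birk φ n ω) ≤ cylSup φ w :=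
  le_csSup ⟨Real.exp (n * M), by
    rintro _ ⟨ω', _, rfl⟩
    exact Real.exp_le_exp.2 (le_of_abs_le (abs_birk_le hM n ω'))⟩ ⟨ω, hω, rfl⟩

variable [Nonempty E]

lemma cylSup_le {n : ℕ} {w : Fin n → E} {c : ℝ}
    (h : ∀ ω ∈ cylW w, Real.exp (birk φ n ω) ≤ c) : cylSup φ w ≤ c :=
  csSup_le ((Set.nonempty_of_mem (wordCfg_mem_cylW (Classical.arbitrary E) w)).image _)
    (by rintro _ ⟨ω, hω, rfl⟩; exact h ω hω)

lemma cylSup_pos (hM : ∀ ω, |φ ω| ≤ M) {n : ℕ} (w : Fin n → E) : 0 < cylSup φ w :=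
  (Real.exp_pos _).trans_le (exp_birk_le_cylSup hM (wordCfg_mem_cylW (Classical.arbitrary E) w))

lemma abs_log_cylSup_sub_le (hM : ∀ ω, |φ ω| ≤ M) {n : ℕ} {w : Fin n → E} {ω : Conf E}
    (hω : ω ∈ cylW w) {D : ℝ} (hD : ∀ ω' ∈ cylW w, |birk φ n ω' - birk φ n ω| ≤ D) :
    |Real.log (cylSup φ w) - birk φ n ω| ≤ D := by
  have hlow := Real.log_le_log (Real.exp_pos _) (exp_birk_le_cylSup hM hω)
  have hsup : cylSup φ w ≤ Real.exp (birk φ n ω + D) := cylSup_le fun ω' hω' =>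
    Real.exp_le_exp.2 (by linarith [le_of_abs_le (hD ω' hω')])
  have hup := Real.log_le_log (cylSup_pos hM w) hsup
  rw [Real.log_exp] at hlow hup
  rw [abs_le]
  constructor <;> linarith [abs_nonneg (birk φ n ω - birk φ n ω), hD ω hω]

lemma cylSup_append_le (hM : ∀ ω, |φ ω| ≤ M) {m n : ℕ} (u : Fin m → E) (v : Fin n → E) :
    cylSup φ (Fin.append u v) ≤ cylSup φ u * cylSup φ v := by
  refine cylSup_le fun ω hω => ?_
  have hu : ω ∈ cylW u := fun j => by simpa using hω (Fin.castAdd n j)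
  have hv : shiftZ m ω ∈ cylW v := fun j => by
    simpa [shiftZ, add_comm] using hω (Fin.natAdd m j)
  rw [birk_add, Real.exp_add]
  exact mul_le_mul (exp_birk_le_cylSup hM hu) (exp_birk_le_cylSup hM hv) (Real.exp_pos _).le
    (cylSup_pos hM u).le

variable [Fintype E]

lemma partitionSum_pos (hM : ∀ ω, |φ ω| ≤ M) (n : ℕ) : 0 < partitionSum φ n :=
  Finset.sum_pos (fun w _ => cylSup_pos hM w) Finset.univ_nonempty

lemma partitionSum_add_le (hM : ∀ ω, |φ ω| ≤ M) (m n : ℕ) :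
    partitionSum φ (m + n) ≤ partitionSum φ m * partitionSum φ n := by
  rw [partitionSum, partitionSum, partitionSum, Finset.sum_mul_sum, ← Finset.sum_product',
    ← (Fin.appendEquiv m n).sum_comp]
  exact Finset.sum_le_sum fun p _ => cylSup_append_le hM p.1 p.2

/-- By Fekete's lemma the `limsup` defining `press` is a limit. -/
theorem tendsto_log_partitionSum_div (hM : ∀ ω, |φ ω| ≤ M) :
    Tendsto (fun n : ℕ => Real.log (partitionSum φ n) / n) atTop (𝓝 (press φ)) := by
  have hsub : Subadditive fun n => Real.log (partitionSum φ n) := fun m n => by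
    rw [← Real.log_mul (partitionSum_pos hM m).ne' (partitionSum_pos hM n).ne']
    exact Real.log_le_log (partitionSum_pos hM _) (partitionSum_add_le hM m n)
  have hM0 : 0 ≤ M := (abs_nonneg _).trans (hM (Classical.arbitrary _))
  have hbdd : BddBelow (Set.range fun n : ℕ => Real.log (partitionSum φ n) / n) := by
    refine ⟨-M, ?_⟩
    rintro _ ⟨n, rfl⟩
    obtain rfl | hn := Nat.eq_zero_or_pos n
    · simpa using hM0
    have w := Classical.arbitrary (Fin n → E)
    have hZ : Real.exp (-(n * M)) ≤ partitionSum φ n :=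
      calc Real.exp (-(n * M)) ≤ Real.exp (birk φ n (wordCfg (Classical.arbitrary E) w)) :=
            Real.exp_le_exp.2 (neg_le_of_abs_le (abs_birk_le hM n _))
        _ ≤ cylSup φ w := exp_birk_le_cylSup hM (wordCfg_mem_cylW _ w)
        _ ≤ partitionSum φ n := Finset.single_le_sum (fun w _ => (cylSup_pos hM w).le)
            (Finset.mem_univ w)
    have := Real.log_le_log (Real.exp_pos _) hZ
    rw [Real.log_exp] at this
    rw [le_div_iff₀ (by exact_mod_cast hn)]
    linarith
  have h := hsub.tendsto_lim hbdd
  rwa [← h.limsup_eq] at h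

end Pressure

lemma ovr_mem_setOf_iff (Λ : Finset ℤ) (ξ : {k // k ∈ Λ} → E) (η ω : Conf E) :
    ovr Λ ξ η ∈ {ω' : Conf E | ∀ k ∈ Λ, ω' k = ω k} ↔ ξ = fun s : {k // k ∈ Λ} => ω s := by
  simp only [ovr, Set.mem_ofPred_eq, funext_iff, Subtype.forall]
  exact forall₂_congr fun k hk => by rw [dif_pos hk]

section DLR

variable [TopologicalSpace E]

lemma continuous_ovr (Λ : Finset ℤ) (ξ : {k // k ∈ Λ} → E) : Continuous (ovr Λ ξ) :=
  continuous_pi fun k => by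
    unfold ovr
    split_ifs <;> fun_prop

variable [DiscreteTopology E]

lemma isClopen_setOf_forall_mem_eq (Λ : Finset ℤ) (ω : Conf E) :
    IsClopen {ω' : Conf E | ∀ k ∈ Λ, ω' k = ω k} := by
  simp only [Set.ofPred_forall]
  exact isClopen_biInter_finset fun k _ => (isClopen_discrete {ω k}).preimage (continuous_apply k)

variable [Fintype E] [MeasurableSpace E] [MeasurableSingletonClass E] {γ : Finset ℤ → Conf E → ℝ}
  {μ : Measure (Conf E)}

lemma IsDLRGibbs.measure_toReal_eq_integral (hμ : IsDLRGibbs γ μ) (Λ : Finset ℤ)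
    (ω : Conf E) :
    (μ {ω' | ∀ k ∈ Λ, ω' k = ω k}).toReal = ∫ η, γ Λ (ovr Λ (fun s => ω s) η) ∂μ := by
  have hcl := isClopen_setOf_forall_mem_eq Λ ω
  rw [← measureReal_def, ← integral_indicator_one hcl.isClosed.measurableSet,
    ← hμ.2 Λ _ (hcl.continuous_indicator continuous_one)]
  congr 1
  funext η
  classical
  simp only [Set.indicator_apply, ovr_mem_setOf_iff, Pi.one_apply, mul_ite, mul_one, mul_zero,
    Finset.sum_ite_eq', Finset.mem_univ, if_true]

end DLR

lemma cylPt_eq_setOf (ω : Conf E) (n : ℕ) :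
    cylPt ω n = {ω' | ∀ k ∈ Finset.Ico 0 (n : ℤ), ω' k = ω k} := by
  ext ω'
  simp only [cylPt, Set.mem_ofPred_eq, Finset.mem_Ico]
  constructor
  · intro h k hk
    lift k to ℕ using hk.1
    exact h k (by exact_mod_cast hk.2)
  · intro h j hj
    exact h j ⟨by omega, by exact_mod_cast hj⟩

section Gibbs

variable {γ : Finset ℤ → Conf E → ℝ}

lemma continuous_logSingle [TopologicalSpace E] (hNN : NonNull γ) (hC : ContSpec γ) :
    Continuous (logSingle γ) :=
  (hC {0}).log fun _ => (hNN.pos _ _).ne'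

lemma exists_abs_phiOf_le [TopologicalSpace E] [CompactSpace E] (hNN : NonNull γ)
    (hg : Continuous (logSingle γ)) (a : E) : ∃ M, ∀ ω, |phiOf γ a ω| ≤ M :=
  let ⟨M, hM⟩ :=
    isCompact_univ.exists_bound_of_continuousOn (continuous_phiOf hNN hg a).continuousOn
  ⟨M, fun ω => hM ω trivial⟩

variable [Fintype E]

noncomputable def partitionSumBdry (a : E) (φ : Conf E → ℝ) (n : ℕ) : ℝ :=
  ∑ w : Fin n → E, Real.exp (birk φ n (wordCfg a w))

lemma abs_log_partitionSumBdry_sub_le {φ : Conf E → ℝ} {M : ℝ} (hM : ∀ ω, |φ ω| ≤ M) (a : E)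
    {n : ℕ} {D : ℝ}
    (hD : ∀ ω ω' : Conf E, (∀ j : ℕ, j < n → ω j = ω' j) → |birk φ n ω - birk φ n ω'| ≤ D) :
    |Real.log (partitionSumBdry a φ n) - Real.log (partitionSum φ n)| ≤ D := by
  have : Nonempty E := ⟨a⟩
  rw [abs_sub_comm]
  refine abs_log_sum_sub_log_sum_le (cylSup_pos hM) (fun _ => Real.exp_pos _) fun w => ?_
  rw [Real.log_exp]
  exact abs_log_cylSup_sub_le hM (wordCfg_mem_cylW a w) fun ω' hω' =>
    hD _ _ ((mem_cylW_iff a w).1 hω')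

lemma abs_log_gamma_sub_le [TopologicalSpace E] [CompactSpace E] (hS : IsSpecification γ)
    (hNN : NonNull γ) (hTI : SpecTI γ) (hg : Continuous (logSingle γ)) (a : E) {n : ℕ}
    (ζ : {k // k ∈ Finset.Ico 0 (n : ℤ)} → E) (η : Conf E) :
    |Real.log (γ (Finset.Ico 0 (n : ℤ)) (ovr _ ζ η))
        - (birk (phiOf γ a) n (ovr _ ζ fun _ => a)
          - Real.log (partitionSumBdry a (phiOf γ a) n))|
      ≤ 8 * sumVariation (logSingle γ) n := by
  rw [partitionSumBdry, ← (wordEquiv n).symm.sum_comp]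
  simp only [wordCfg, Equiv.apply_symm_apply]
  calc _ ≤ 2 * (4 * sumVariation (logSingle γ) n) :=
        abs_log_sub_log_sum_exp_le (fun _ => hNN.pos _ _) (hS.2.1 _ η)
          (fun ζ' => abs_log_gamma_sub_birk_le a ζ' η hS hNN hTI hg) ζ
    _ = 8 * sumVariation (logSingle γ) n := by ring

theorem abs_log_measure_cylPt_sub_le [TopologicalSpace E] [DiscreteTopology E]
    [MeasurableSpace E] [MeasurableSingletonClass E] (hγ : IsGibbsSpec γ) (hTI : SpecTI γ)
    (a : E) {μ : Measure (Conf E)} (hμ : IsDLRGibbs γ μ) (n : ℕ) (ω : Conf E) :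
    0 < (μ (cylPt ω n)).toReal ∧
      |Real.log (μ (cylPt ω n)).toReal
          - (birk (phiOf γ a) n ω - Real.log (partitionSum (phiOf γ a) n))|
        ≤ 12 * sumVariation (logSingle γ) n := by
  obtain ⟨hS, hNN, hC⟩ := hγ
  have : IsProbabilityMeasure μ := hμ.1
  have hg := continuous_logSingle hNN hC
  obtain ⟨M, hM⟩ := exists_abs_phiOf_le hNN hg a
  obtain ⟨hpos, hlog⟩ := abs_log_integral_sub_le (μ := μ)
    (G := fun η => γ (Finset.Ico 0 (n : ℤ)) (ovr _ (fun s => ω s) η))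
    ((hC _).comp (continuous_ovr _ _)).aestronglyMeasurable (fun _ => hNN.pos _ _)
    (abs_log_gamma_sub_le hS hNN hTI hg a (fun s => ω s))
  rw [← hμ.measure_toReal_eq_integral, ← cylPt_eq_setOf] at hpos hlog
  have hbirk := abs_birk_phiOf_sub_le hNN hg a (n := n)
    (ω := ovr (Finset.Ico 0 (n : ℤ)) (fun s => ω s) fun _ => a) (ω' := ω) fun j hj => by
      simp [ovr, Finset.mem_Ico, hj]
  have hZ := abs_log_partitionSumBdry_sub_le hM a (n := n) fun _ _ =>
    abs_birk_phiOf_sub_le hNN hg a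
  refine ⟨hpos, ?_⟩
  rw [abs_le] at hlog hbirk hZ ⊢
  constructor <;> linarith

end Gibbs

lemma weakBowenGibbs_of_abs_log_le [MeasurableSpace E] {μ : Measure (Conf E)}
    {φ : Conf E → ℝ} {P : ℝ} {Z V : ℕ → ℝ}
    (hZ : Tendsto (fun n : ℕ => Real.log (Z n) / n) atTop (𝓝 P))
    (hV : Tendsto (fun n : ℕ => V n / n) atTop (𝓝 0))
    (h : ∀ n ω, 0 < (μ (cylPt ω n)).toReal ∧
      |Real.log (μ (cylPt ω n)).toReal - (birk φ n ω - Real.log (Z n))| ≤ V n) :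
    WeakBowenGibbs μ φ P := by
  refine ⟨fun n => Real.exp (V n + |Real.log (Z n) - n * P|), fun n => Real.exp_pos _, ?_,
    fun n ω => ?_⟩
  · have hlim := hV.add (hZ.sub_const P).abs
    rw [sub_self, abs_zero, add_zero] at hlim
    refine hlim.congr' <| (eventually_gt_atTop 0).mono fun n hn => ?_
    have hn : (0 : ℝ) < n := Nat.cast_pos.2 hn
    dsimp only
    rw [Real.log_exp, add_div, abs_sub_comm (_ / _), abs_sub_comm _ (_ * P),
      show P - Real.log (Z n) / n = (n * P - Real.log (Z n)) / n by field_simp, abs_div,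
      abs_of_pos hn]
  · obtain ⟨hpos, hlog⟩ := h n ω
    have hsum := abs_add_le (Real.log (μ (cylPt ω n)).toReal - (birk φ n ω - Real.log (Z n)))
      (n * P - Real.log (Z n))
    rw [show Real.log (μ (cylPt ω n)).toReal - (birk φ n ω - Real.log (Z n))
        + (n * P - Real.log (Z n)) = Real.log (μ (cylPt ω n)).toReal - (birk φ n ω - n * P)
        by ring, abs_sub_comm (n * P)] at hsum
    have hc := abs_le.1 (hsum.trans (add_le_add_left hlog _))
    rw [← Real.exp_log hpos, ← Real.exp_sub, ← Real.exp_neg]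
    exact ⟨Real.exp_le_exp.2 (by linarith), Real.exp_le_exp.2 (by linarith)⟩

theorem gibbs_weakBowenGibbs_general [Fintype E] [TopologicalSpace E] [DiscreteTopology E]
    [MeasurableSpace E] [MeasurableSingletonClass E]
    (γ : Finset ℤ → Conf E → ℝ) (hγ : IsGibbsSpec γ) (hTI : SpecTI γ) (a : E)
    (μ : Measure (Conf E)) (hμ : IsDLRGibbs γ μ) :
    WeakBowenGibbs μ (phiOf γ a) (press (phiOf γ a)) := by
  have : Nonempty E := ⟨a⟩
  have hg := continuous_logSingle hγ.2.1 hγ.2.2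
  obtain ⟨M, hM⟩ := exists_abs_phiOf_le hγ.2.1 hg a
  refine weakBowenGibbs_of_abs_log_le (tendsto_log_partitionSum_div hM) ?_
    (abs_log_measure_cylPt_sub_le hγ hTI a hμ)
  simpa [mul_div_assoc] using (tendsto_sumVariation_div hg).const_mul 12

/-- Every shift-invariant DLR-Gibbs measure `μ ∈ G_S(γ)` for a
translation-invariant Gibbsian specification `γ` is weak Bowen-Gibbs with respect to the
associated potential `φ_γ`, with constant `P = P(φ_γ)`. -/
theorem gibbs_weakBowenGibbs [Fintype E] [Nonempty E] [TopologicalSpace E] [DiscreteTopology E]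
    [MeasurableSpace E] [MeasurableSingletonClass E]
    (γ : Finset ℤ → Conf E → ℝ) (hγ : IsGibbsSpec γ) (hTI : SpecTI γ) (a : E)
    (μ : Measure (Conf E)) (hμ : IsDLRGibbs γ μ) (hinv : ShiftInv μ) :
    WeakBowenGibbs μ (phiOf γ a) (press (phiOf γ a)) :=
  gibbs_weakBowenGibbs_general γ hγ hTI a μ hμ

end GP
end
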